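/- Under the standing assumptions, let i, j be nodes and suppose k > max( (w_i* + v_j* − γ_{i,j})/λ* + (n − 1), (w_i* − α_i + v_j* − β_j)/λ* + 2(n − 1) ), where the term involving γ_{i,j} is omitted from the maximum if γ_{i,j} = −∞. Then Γ(k)_{i,j} = Γ(k)_{i,1} ⊗ Γ(k)_{1,j} = Γ(k)_{i,1} + Γ(k)_{1,j}. -/

import Mathlib

/-
Common framework for "A bound for the rank-one transient of inhomogeneous matrix
products in special case" (Kennedy-Cochran-Patrick, Sergeev, Berežný).

We work over the max-plus semiring, modelled inside `EReal` (so `⊥ = -∞` is the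
max-plus zero and ordinary addition is the max-plus multiplication).  Matrices are
functions `Fin m → Fin m → EReal`.  The distinguished node "1" of the paper is the
node `0 : Fin (n+2)` (so that `n + 2 ≥ 2` plays the role of the paper's `n ≥ 2`).

A walk is a nonempty list of nodes.  Walks on the trellis digraph of the product
`A 1 ⊗ ⋯ ⊗ A k` additionally record the level at which they start: the arc from the
`(l-1)`-st to the `l`-th node of a walk starting at level `s` has weight given by the
matrix `A (s + l)`.
-/

open scoped Classical

noncomputable section

namespace MaxPlusTransient

variable {m : ℕ}

/-- Weight of a walk on the trellis digraph, starting at level `s`. -/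
def tw (M : ℕ → Fin m → Fin m → EReal) : ℕ → List (Fin m) → EReal
  | _, [] => 0
  | _, [_] => 0
  | s, a :: b :: t => M (s + 1) a b + tw M (s + 1) (b :: t)

/-- Being a walk on the trellis digraph, starting at level `s` (all traversed arcs exist,
i.e. have weight `≠ -∞`); a walk is a nonempty list of nodes. -/
def twalk (M : ℕ → Fin m → Fin m → EReal) : ℕ → List (Fin m) → Prop
  | _, [] => False
  | _, [_] => True
  | s, a :: b :: t => M (s + 1) a b ≠ ⊥ ∧ twalk M (s + 1) (b :: t)

/-- Weight of a walk on the digraph `D_A` of a single matrix `A`. -/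
def wWeight (A : Fin m → Fin m → EReal) (W : List (Fin m)) : EReal :=
  tw (fun _ => A) 0 W

/-- Being a walk on the digraph `D_A` of a matrix `A`. -/
def isWalk (A : Fin m → Fin m → EReal) (W : List (Fin m)) : Prop :=
  twalk (fun _ => A) 0 W

/-- A path is a walk with no repeated nodes. -/
def isPath (A : Fin m → Fin m → EReal) (W : List (Fin m)) : Prop :=
  isWalk A W ∧ W.Nodup

/-- A cycle is a walk of length (number of arcs) at least one whose first and last
nodes coincide. -/
def isCycle (A : Fin m → Fin m → EReal) (W : List (Fin m)) : Prop :=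
  isWalk A W ∧ 2 ≤ W.length ∧ W.head? = W.getLast?

/-- A matrix is irreducible iff its digraph is strongly connected. -/
def irreducible (A : Fin m → Fin m → EReal) : Prop :=
  ∀ i j : Fin m, ∃ W, isWalk A W ∧ W.head? = some i ∧ W.getLast? = some j

/-- Geometric equivalence: the digraphs have the same arcs. -/
def geomEq (A B : Fin m → Fin m → EReal) : Prop :=
  ∀ i j, A i j = ⊥ ↔ B i j = ⊥

/-- Max-plus matrix product. -/
def mp (A B : Fin m → Fin m → EReal) : Fin m → Fin m → EReal :=
  fun i j => ⨆ s, A i s + B s j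

/-- `Gamma M k = M 1 ⊗ M 2 ⊗ ⋯ ⊗ M k` (max-plus product), with `Gamma M 0` the
max-plus identity matrix. -/
def Gamma (M : ℕ → Fin m → Fin m → EReal) : ℕ → Fin m → Fin m → EReal
  | 0 => fun i j => if i = j then 0 else ⊥
  | k + 1 => mp (Gamma M k) (M (k + 1))

/-- An initial walk from `i` to `one` on the trellis digraph of `M 1 ⊗ ⋯ ⊗ M k`:
it starts at node `i` at level `0`, ends at node `one` at some level `≤ k`, and the
only node of the walk equal to `one` is its final node. -/
def isInitialWalk (M : ℕ → Fin m → Fin m → EReal) (one : Fin m) (k : ℕ) (i : Fin m)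
    (W : List (Fin m)) : Prop :=
  twalk M 0 W ∧ W.length - 1 ≤ k ∧ W.head? = some i ∧ W.getLast? = some one ∧
    ∀ v ∈ W.dropLast, v ≠ one

/-- A final walk from `one` to `j` on the trellis digraph of `M 1 ⊗ ⋯ ⊗ M k`:
it starts at node `one` at some level `s`, ends at node `j` at level `k`, and the
only node of the walk equal to `one` is its first node. -/
def isFinalWalk (M : ℕ → Fin m → Fin m → EReal) (one : Fin m) (k : ℕ) (j : Fin m) (s : ℕ)
    (W : List (Fin m)) : Prop :=
  twalk M s W ∧ s + (W.length - 1) = k ∧ W.head? = some one ∧ W.getLast? = some j ∧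
    ∀ v ∈ W.tail, v ≠ one

/-- A full walk from `i` to `j` on the trellis digraph of `M 1 ⊗ ⋯ ⊗ M k`: it goes
from node `i` at level `0` to node `j` at level `k`. -/
def isFullWalk (M : ℕ → Fin m → Fin m → EReal) (k : ℕ) (i j : Fin m)
    (W : List (Fin m)) : Prop :=
  twalk M 0 W ∧ W.length = k + 1 ∧ W.head? = some i ∧ W.getLast? = some j

/-- `w_i*`: maximal weight of an initial walk from `i` to `one`. -/
def wStar (M : ℕ → Fin m → Fin m → EReal) (one : Fin m) (k : ℕ) (i : Fin m) : EReal :=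
  sSup {x : EReal | ∃ W, isInitialWalk M one k i W ∧ x = tw M 0 W}

/-- `v_j*`: maximal weight of a final walk from `one` to `j`. -/
def vStar (M : ℕ → Fin m → Fin m → EReal) (one : Fin m) (k : ℕ) (j : Fin m) : EReal :=
  sSup {x : EReal | ∃ s W, isFinalWalk M one k j s W ∧ x = tw M s W}

/-- `α_i`: maximal weight of a path on `D_A` from `i` to `one`. -/
def alphaE (A : Fin m → Fin m → EReal) (one : Fin m) (i : Fin m) : EReal :=
  sSup {x : EReal | ∃ W, isPath A W ∧ W.head? = some i ∧ W.getLast? = some one ∧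
    x = wWeight A W}

/-- `β_j`: maximal weight of a path on `D_A` from `one` to `j`. -/
def betaE (A : Fin m → Fin m → EReal) (one : Fin m) (j : Fin m) : EReal :=
  sSup {x : EReal | ∃ W, isPath A W ∧ W.head? = some one ∧ W.getLast? = some j ∧
    x = wWeight A W}

/-- `γ_{i,j}`: maximal weight of a path on `D_A` from `i` to `j` not passing through
`one` (`-∞` if no such path exists). -/
def gammaE (A : Fin m → Fin m → EReal) (one : Fin m) (i j : Fin m) : EReal :=
  sSup {x : EReal | ∃ W, isPath A W ∧ W.head? = some i ∧ W.getLast? = some j ∧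
    (∀ v ∈ W, v ≠ one) ∧ x = wWeight A W}

/-- The set of mean weights of cycles of `D_A` avoiding the node `one`. -/
def lamSet (A : Fin m → Fin m → EReal) (one : Fin m) : Set ℝ :=
  {x : ℝ | ∃ W, isCycle A W ∧ (∀ v ∈ W, v ≠ one) ∧
    ∃ r : ℝ, wWeight A W = (r : EReal) ∧ x = r / ((W.length : ℝ) - 1)}

/-- `λ*`: the supremum of the mean weights of cycles of `D_A` avoiding `one`. -/
def lamStar (A : Fin m → Fin m → EReal) (one : Fin m) : ℝ :=
  sSup (lamSet A one)

/-- `w_i`: maximal weight of a walk of length at most `k` from `i` to `one` on `D_A`. -/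
def wInf (A : Fin m → Fin m → EReal) (one : Fin m) (k : ℕ) (i : Fin m) : EReal :=
  sSup {x : EReal | ∃ W, isWalk A W ∧ W.length - 1 ≤ k ∧ W.head? = some i ∧
    W.getLast? = some one ∧ x = wWeight A W}

/-- `v_j`: maximal weight of a walk of length at most `k` from `one` to `j` on `D_A`. -/
def vInf (A : Fin m → Fin m → EReal) (one : Fin m) (k : ℕ) (j : Fin m) : EReal :=
  sSup {x : EReal | ∃ W, isWalk A W ∧ W.length - 1 ≤ k ∧ W.head? = some one ∧
    W.getLast? = some j ∧ x = wWeight A W}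

/-- The standing assumptions of the paper on the set `𝒳` and its entrywise boundaries
`Asup` (supremum) and `Ainf` (infimum):
matrices of `𝒳` have no `+∞` entries, `Asup`/`Ainf` are the entrywise sup/inf,
`Asup` has no `+∞` entries and `Ainf` has no `-∞` entries where matrices of `𝒳` are
finite; all matrices of `𝒳` and also `Ainf` are irreducible and pairwise geometrically
equivalent; every matrix of `𝒳` and also `Asup` has `(one, one)` entry `0` and all its
cycles other than (repetitions of) the loop at `one` have strictly negative (mean)
weight. -/
def Standing (𝒳 : Set (Fin m → Fin m → EReal)) (Asup Ainf : Fin m → Fin m → EReal)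
    (one : Fin m) : Prop :=
  𝒳.Nonempty ∧
  (∀ X ∈ 𝒳, ∀ i j, X i j ≠ ⊤) ∧
  (∀ i j, Asup i j = ⨆ X ∈ 𝒳, X i j) ∧
  (∀ i j, Ainf i j = ⨅ X ∈ 𝒳, X i j) ∧
  (∀ i j, Asup i j ≠ ⊤) ∧
  (∀ X ∈ 𝒳, ∀ i j, X i j ≠ ⊥ → Ainf i j ≠ ⊥) ∧
  (∀ X ∈ 𝒳, irreducible X) ∧
  irreducible Ainf ∧
  (∀ X ∈ 𝒳, geomEq X Ainf) ∧
  (∀ X ∈ 𝒳, X one one = 0) ∧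
  (∀ X ∈ 𝒳, ∀ W, isCycle X W → (∃ v ∈ W, v ≠ one) → wWeight X W < 0) ∧
  Asup one one = 0 ∧
  (∀ W, isCycle Asup W → (∃ v ∈ W, v ≠ one) → wWeight Asup W < 0)

section Lemmas
variable {m : ℕ} {M M' : ℕ → Fin m → Fin m → EReal} {A : Fin m → Fin m → EReal}

lemma tw_append (M : ℕ → Fin m → Fin m → EReal) (x : Fin m) (W₂ : List (Fin m)) :
    ∀ (W₁ : List (Fin m)) (s : ℕ),
      tw M s (W₁ ++ x :: W₂) = tw M s (W₁ ++ [x]) + tw M (s + W₁.length) (x :: W₂) := by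
  intro W₁
  induction W₁ with
  | nil => intro s; simp [tw]
  | cons a W₁ ih =>
    intro s
    cases W₁ with
    | nil =>
      cases W₂ with
      | nil => simp [tw]
      | cons c t => simp [tw, add_assoc]
    | cons b W₁' =>
      have e1 : tw M s ((a :: b :: W₁') ++ x :: W₂)
          = M (s+1) a b + tw M (s+1) ((b::W₁') ++ x :: W₂) := rfl
      have e2 : tw M s ((a :: b :: W₁') ++ [x])
          = M (s+1) a b + tw M (s+1) ((b::W₁') ++ [x]) := rfl
      have e3 : s + 1 + (b::W₁').length = s + (a :: b :: W₁').length := by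
        simp; omega
      rw [e1, e2, ih (s+1), e3, add_assoc]

lemma twalk_append (M : ℕ → Fin m → Fin m → EReal) (x : Fin m) (W₂ : List (Fin m)) :
    ∀ (W₁ : List (Fin m)) (s : ℕ),
      twalk M s (W₁ ++ x :: W₂) ↔ twalk M s (W₁ ++ [x]) ∧ twalk M (s + W₁.length) (x :: W₂) := by
  intro W₁
  induction W₁ with
  | nil => intro s; simp [twalk]
  | cons a W₁ ih =>
    intro s
    cases W₁ with
    | nil =>
      cases W₂ with
      | nil => simp [twalk]
      | cons c t => simp [twalk, and_assoc]
    | cons b W₁' =>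
      have e1 : twalk M s ((a :: b :: W₁') ++ x :: W₂)
          ↔ (M (s+1) a b ≠ ⊥ ∧ twalk M (s+1) ((b::W₁') ++ x :: W₂)) := Iff.rfl
      have e2 : twalk M s ((a :: b :: W₁') ++ [x])
          ↔ (M (s+1) a b ≠ ⊥ ∧ twalk M (s+1) ((b::W₁') ++ [x])) := Iff.rfl
      have e3 : s + 1 + (b::W₁').length = s + (a :: b :: W₁').length := by
        simp; omega
      rw [e1, e2, ih (s+1), e3, and_assoc]

lemma tw_const (A : Fin m → Fin m → EReal) :
    ∀ (W : List (Fin m)) (s : ℕ), tw (fun _ => A) s W = wWeight A W := by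
  have key : ∀ (W : List (Fin m)) (s t : ℕ), tw (fun _ => A) s W = tw (fun _ => A) t W := by
    intro W
    induction W with
    | nil => intro s t; simp [tw]
    | cons a W ih =>
      intro s t
      cases W with
      | nil => simp [tw]
      | cons b W' => simp only [tw]; rw [ih (s+1) (t+1)]
  intro W s; exact key W s 0

lemma twalk_const (A : Fin m → Fin m → EReal) :
    ∀ (W : List (Fin m)) (s : ℕ), twalk (fun _ => A) s W ↔ isWalk A W := by
  have key : ∀ (W : List (Fin m)) (s t : ℕ), twalk (fun _ => A) s W ↔ twalk (fun _ => A) t W := by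
    intro W
    induction W with
    | nil => intro s t; simp [twalk]
    | cons a W ih =>
      intro s t
      cases W with
      | nil => simp [twalk]
      | cons b W' => simp only [twalk]; rw [ih (s+1) (t+1)]
  intro W s; exact key W s 0

lemma tw_mono : ∀ (W : List (Fin m)) (s : ℕ),
    (∀ l, s < l → l < s + W.length → ∀ a b, M l a b ≤ M' l a b) →
    tw M s W ≤ tw M' s W := by
  intro W
  induction W with
  | nil => intro s h; simp [tw]
  | cons a W ih =>
    intro s h
    cases W with
    | nil => simp [tw]
    | cons b W' =>
      simp only [tw]
      refine add_le_add (h (s+1) (by omega) (by simp only [List.length_cons]; omega) a b) (ih (s+1) ?_)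
      intro l hl hl' a' b'
      exact h l (by omega) (by simp only [List.length_cons] at hl' ⊢; omega) a' b'

lemma twalk_mono : ∀ (W : List (Fin m)) (s : ℕ),
    (∀ l, s < l → l < s + W.length → ∀ a b, M l a b ≤ M' l a b) →
    twalk M s W → twalk M' s W := by
  intro W
  induction W with
  | nil => intro s h hw; exact hw
  | cons a W ih =>
    intro s h hw
    cases W with
    | nil => trivial
    | cons b W' =>
      obtain ⟨h1, h2⟩ := hw
      refine ⟨fun hbot => h1 ?_, ih (s+1) (fun l hl hl' a' b' => h l (by omega) (by simp only [List.length_cons] at hl' ⊢; omega) a' b') h2⟩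
      · have := h (s+1) (by omega) (by simp only [List.length_cons]; omega) a b
        rw [hbot] at this
        exact le_bot_iff.mp this

lemma tw_real : ∀ (W : List (Fin m)) (s : ℕ), (∀ l a b, M l a b ≠ ⊤) → twalk M s W →
    ∃ r : ℝ, tw M s W = (r : EReal) := by
  intro W
  induction W with
  | nil => intro s _ _; exact ⟨0, by simp [tw]⟩
  | cons a W ih =>
    intro s htop hw
    cases W with
    | nil => exact ⟨0, by simp [tw]⟩
    | cons b W' =>
      obtain ⟨h1, h2⟩ := hw
      obtain ⟨r, hr⟩ := ih (s+1) htop h2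
      obtain ⟨q, hq⟩ : ∃ q : ℝ, M (s+1) a b = (q : EReal) :=
        ⟨(M (s+1) a b).toReal, (EReal.coe_toReal (htop _ a b) h1).symm⟩
      exact ⟨q + r, by simp [tw, hr, hq]⟩

end Lemmas
section ListHelpers
variable {α : Type*} [DecidableEq α]

lemma exists_first_split {a : α} : ∀ {l : List α}, a ∈ l →
    ∃ l₁ l₂, l = l₁ ++ a :: l₂ ∧ a ∉ l₁ := by
  intro l
  induction l with
  | nil => intro h; simp at h
  | cons b t ih =>
    intro h
    by_cases hb : a = b
    · exact ⟨[], t, by simp [hb], by simp⟩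
    · have : a ∈ t := by
        rcases List.mem_cons.mp h with h' | h'
        · exact absurd h' hb
        · exact h'
      obtain ⟨l₁, l₂, he, hn⟩ := ih this
      exact ⟨b :: l₁, l₂, by simp [he], by simp [hn, hb]⟩

lemma exists_last_split {a : α} {l : List α} (h : a ∈ l) :
    ∃ l₁ l₂, l = l₁ ++ a :: l₂ ∧ a ∉ l₂ := by
  have h' : a ∈ l.reverse := by simpa using h
  obtain ⟨r₁, r₂, he, hn⟩ := exists_first_split h'
  refine ⟨r₂.reverse, r₁.reverse, ?_, by simpa using hn⟩
  have := congrArg List.reverse he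
  simpa using this

lemma exists_dup_split : ∀ {l : List α}, ¬ l.Nodup →
    ∃ (v : α) (l₁ l₂ l₃ : List α), l = l₁ ++ v :: l₂ ++ v :: l₃ := by
  intro l
  induction l with
  | nil => intro h; simp at h
  | cons b t ih =>
    intro h
    rw [List.nodup_cons] at h
    push_neg at h
    by_cases hb : b ∈ t
    · obtain ⟨l₂, l₃, he, _⟩ := exists_first_split hb
      exact ⟨b, [], l₂, l₃, by simp [he]⟩
    · obtain ⟨v, l₁, l₂, l₃, he⟩ := ih (h hb)
      exact ⟨v, b :: l₁, l₂, l₃, by simp [he]⟩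

lemma mem_interior_of_mem_mid {x : α} {u w l : List α} (hu : u ≠ []) (hw : w ≠ [])
    (hx : x ∈ l) : x ∈ (u ++ l ++ w).dropLast.tail := by
  rw [List.append_assoc, List.dropLast_append_of_ne_nil (by simp [hw])]
  cases u with
  | nil => exact absurd rfl hu
  | cons c u' =>
    simp only [List.cons_append, List.tail_cons]
    refine List.mem_append_right _ ?_
    rw [List.dropLast_append_of_ne_nil hw]
    exact List.mem_append_left _ hx

lemma mem_interior_insert {x : α} {u c w : List α} (hu : u ≠ []) (hc : c ≠ [])
    (hx : x ∈ (u ++ w).dropLast.tail) : x ∈ (u ++ c ++ w).dropLast.tail := by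
  cases w with
  | nil =>
    simp only [List.append_nil] at hx
    have hx' : x ∈ u.tail.dropLast := by
      have : u.dropLast.tail = u.tail.dropLast := by
        cases u with
        | nil => rfl
        | cons a u' =>
          cases u' with
          | nil => rfl
          | cons b u'' => simp [List.dropLast]
      rwa [this] at hx
    have hx2 : x ∈ u.tail := (List.dropLast_sublist _).mem hx'
    rw [List.append_nil, List.dropLast_append_of_ne_nil hc]
    cases u with
    | nil => exact absurd rfl hu
    | cons a u' => simp only [List.cons_append, List.tail_cons]; exact List.mem_append_left _ hx2
  | cons d w' =>
    rw [List.dropLast_append_of_ne_nil (by simp)] at hx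
    rw [List.append_assoc, List.dropLast_append_of_ne_nil (by simp)]
    cases u with
    | nil => exact absurd rfl hu
    | cons a u' =>
      simp only [List.cons_append, List.tail_cons] at hx ⊢
      rcases List.mem_append.mp hx with h | h
      · exact List.mem_append_left _ h
      · refine List.mem_append_right _ ?_
        rw [List.dropLast_append_of_ne_nil (by simp)]
        exact List.mem_append_right _ h

lemma head?_append_cons (p : List α) (x : α) (t s : List α) :
    (p ++ x :: t).head? = (p ++ x :: s).head? := by
  cases p <;> simp

lemma getLast?_idle {β : Type*} (z : β) (t : ℕ) (T : List β) :
    (z :: (List.replicate t z ++ T)).getLast? = (z :: T).getLast? := by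
  induction t with
  | zero => simp
  | succ t ih =>
    rw [List.replicate_succ, List.cons_append, List.getLast?_cons_cons, ih]

end ListHelpers

section MoreList
lemma mem_tail_of_mem_dropLast_tail {α : Type*} (l : List α) {x : α}
    (h : x ∈ l.dropLast.tail) : x ∈ l.tail := by
  have hcomm : l.dropLast.tail = l.tail.dropLast := by
    cases l with
    | nil => rfl
    | cons a l' =>
      cases l' with
      | nil => rfl
      | cons b l'' => simp [List.dropLast]
  rw [hcomm] at h
  exact (List.dropLast_sublist _).mem h
end MoreList
section Idle
set_option linter.unusedSectionVars false
variable {m : ℕ} {M : ℕ → Fin m → Fin m → EReal}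

lemma tw_idle (z : Fin m) (T : List (Fin m)) :
    ∀ (t s : ℕ), (∀ l, s < l → l ≤ s + t → M l z z = 0) →
      tw M s (z :: (List.replicate t z ++ T)) = tw M (s + t) (z :: T) := by
  intro t
  induction t with
  | zero => intro s _; simp
  | succ t ih =>
    intro s hz
    rw [List.replicate_succ, List.cons_append]
    have e1 : tw M s (z :: z :: (List.replicate t z ++ T))
        = M (s+1) z z + tw M (s+1) (z :: (List.replicate t z ++ T)) := rfl
    rw [e1, hz (s+1) (by omega) (by omega), ih (s+1) (fun l h1 h2 => hz l (by omega) (by omega)),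
      zero_add]
    congr 1
    omega

lemma twalk_idle (z : Fin m) (T : List (Fin m)) :
    ∀ (t s : ℕ), (∀ l, s < l → l ≤ s + t → M l z z = 0) →
      (twalk M s (z :: (List.replicate t z ++ T)) ↔ twalk M (s + t) (z :: T)) := by
  intro t
  induction t with
  | zero => intro s _; simp
  | succ t ih =>
    intro s hz
    rw [List.replicate_succ, List.cons_append]
    have e1 : twalk M s (z :: z :: (List.replicate t z ++ T))
        ↔ (M (s+1) z z ≠ ⊥ ∧ twalk M (s+1) (z :: (List.replicate t z ++ T))) := Iff.rfl
    rw [e1, ih (s+1) (fun l h1 h2 => hz l (by omega) (by omega))]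
    have : M (s+1) z z ≠ ⊥ := by rw [hz (s+1) (by omega) (by omega)]; simp
    rw [show s + 1 + t = s + (t+1) from by omega]
    exact ⟨And.right, fun h => ⟨this, h⟩⟩

end Idle

section Finiteness
variable {m : ℕ}

lemma finite_weight_set (L : ℕ) (P : List (Fin m) → Prop)
    (hP : ∀ W, P W → W.length ≤ L) (f : List (Fin m) → EReal) :
    {x : EReal | ∃ W, P W ∧ x = f W}.Finite := by
  have h1 : {l : List (Fin m) | l.length ≤ L}.Finite := List.finite_length_le _ L
  apply (h1.image f).subset
  rintro x ⟨W, hW, rfl⟩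
  exact ⟨W, hP W hW, rfl⟩

lemma finite_weight_set2 (L K : ℕ) (P : ℕ → List (Fin m) → Prop)
    (hP : ∀ s W, P s W → s ≤ K ∧ W.length ≤ L) (f : ℕ → List (Fin m) → EReal) :
    {x : EReal | ∃ s W, P s W ∧ x = f s W}.Finite := by
  have h1 : ({s : ℕ | s ≤ K} ×ˢ {l : List (Fin m) | l.length ≤ L}).Finite :=
    (Set.finite_Iic K).prod (List.finite_length_le _ L)
  apply (h1.image (fun p => f p.1 p.2)).subset
  rintro x ⟨s, W, hW, rfl⟩
  exact ⟨(s, W), ⟨(hP s W hW).1, (hP s W hW).2⟩, rfl⟩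

end Finiteness

section GammaSup
variable {m : ℕ}

lemma eq_concat_of_getLast? {α : Type*} {l : List α} {x : α} (h : l.getLast? = some x) :
    ∃ Y, l = Y ++ [x] := by
  have hne : l ≠ [] := by rintro rfl; simp at h
  have h2 : l.getLast hne = x := by
    rw [List.getLast?_eq_getLast hne] at h; injection h
  exact ⟨l.dropLast, by rw [← h2, List.dropLast_append_getLast hne]⟩

lemma Gamma_eq_sSup (A : ℕ → Fin m → Fin m → EReal) :
    ∀ (k : ℕ) (i j : Fin m),
      Gamma A k i j = sSup {x | ∃ W, isFullWalk A k i j W ∧ x = tw A 0 W} := by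
  intro k
  induction k with
  | zero =>
    intro i j
    by_cases hij : i = j
    · subst hij
      have hset : {x | ∃ W, isFullWalk A 0 i i W ∧ x = tw A 0 W} = {(0:EReal)} := by
        ext x
        simp only [Set.mem_setOf_eq, Set.mem_singleton_iff]
        constructor
        · rintro ⟨W, ⟨hw, hlen, hh, hl⟩, rfl⟩
          obtain ⟨a, rfl⟩ := List.length_eq_one_iff.mp hlen
          simp [tw]
        · rintro rfl
          exact ⟨[i], ⟨trivial, rfl, rfl, rfl⟩, rfl⟩
      rw [hset, sSup_singleton]
      show (if i = i then (0:EReal) else ⊥) = 0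
      rw [if_pos rfl]
    · have hset : {x | ∃ W, isFullWalk A 0 i j W ∧ x = tw A 0 W} = ∅ := by
        ext x
        simp only [Set.mem_setOf_eq, Set.mem_empty_iff_false, iff_false]
        rintro ⟨W, ⟨hw, hlen, hh, hl⟩, rfl⟩
        obtain ⟨a, rfl⟩ := List.length_eq_one_iff.mp hlen
        simp only [List.head?_cons, Option.some.injEq] at hh
        simp only [List.getLast?_singleton, Option.some.injEq] at hl
        exact hij (by rw [← hh, hl])
      rw [hset, sSup_empty]
      show (if i = j then (0:EReal) else ⊥) = ⊥
      rw [if_neg hij]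
  | succ k ih =>
    intro i j
    have hGdef : Gamma A (k+1) i j = ⨆ s, Gamma A k i s + A (k+1) s j := rfl
    apply le_antisymm
    · rw [hGdef]
      apply iSup_le
      intro s
      rw [ih i s]
      rcases Set.eq_empty_or_nonempty {x | ∃ W, isFullWalk A k i s W ∧ x = tw A 0 W}
        with hemp | hne
      · rw [hemp, sSup_empty, EReal.bot_add]; exact bot_le
      · have hfin : {x | ∃ W, isFullWalk A k i s W ∧ x = tw A 0 W}.Finite :=
          finite_weight_set (k+1) _ (fun W hW => le_of_eq hW.2.1) _
        obtain ⟨W₀, hW₀, hval⟩ := hne.csSup_mem hfin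
        rw [hval]
        by_cases hbot : A (k+1) s j = ⊥
        · rw [hbot, EReal.add_bot]; exact bot_le
        · obtain ⟨hw, hlen, hh, hl⟩ := hW₀
          have hW₀ne : W₀ ≠ [] := by
            intro h; rw [h] at hlen; simp at hlen
          obtain ⟨Y, hYW⟩ := eq_concat_of_getLast? hl
          have hYlen : Y.length = k := by
            have := congrArg List.length hYW
            simp [hlen] at this
            omega
          have hform : W₀ ++ [j] = Y ++ s :: [j] := by
            rw [hYW, List.append_assoc]; rfl
          apply le_sSup
          refine ⟨W₀ ++ [j], ⟨?_, ?_, ?_, ?_⟩, ?_⟩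
          · rw [hform, twalk_append]
            refine ⟨by rw [← hYW]; exact hw, ?_⟩
            rw [hYlen]
            exact ⟨by simpa using hbot, trivial⟩
          · simp [hlen]
          · rw [List.head?_append_of_ne_nil _ hW₀ne]; exact hh
          · exact List.getLast?_concat
          · rw [hform, tw_append, hYlen, ← hYW]
            have harc : tw A (0 + k) (s :: [j]) = A (k+1) s j := by
              show A (0 + k + 1) s j + tw A (0 + k + 1) [j] = A (k+1) s j
              show A (0 + k + 1) s j + 0 = A (k+1) s j
              rw [add_zero]
              norm_num
            rw [harc]
    · apply sSup_le
      rintro x ⟨W, ⟨hw, hlen, hh, hl⟩, rfl⟩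
      obtain ⟨Z, hZW⟩ := eq_concat_of_getLast? hl
      have hZlen : Z.length = k + 1 := by
        have := congrArg List.length hZW
        simp [hlen] at this
        omega
      have hZne : Z ≠ [] := by intro h; rw [h] at hZlen; simp at hZlen
      have hZlast : Z.getLast? = some (Z.getLast hZne) := List.getLast?_eq_getLast hZne
      obtain ⟨Y, hYZ⟩ := eq_concat_of_getLast? hZlast
      have hYlen : Y.length = k := by
        have := congrArg List.length hYZ
        simp [hZlen] at this
        omega
      set s := Z.getLast hZne with hsdef
      have hWform : W = Y ++ s :: [j] := by
        rw [hZW, hYZ, List.append_assoc]; rfl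
      rw [hWform, tw_append, hYlen]
      have hsplit := (twalk_append A s [j] Y 0).mp (by rw [← hWform]; exact hw)
      rw [hYlen] at hsplit
      have harc : tw A (0 + k) (s :: [j]) = A (k+1) s j := by
        show A (0 + k + 1) s j + tw A (0 + k + 1) [j] = A (k+1) s j
        show A (0 + k + 1) s j + 0 = A (k+1) s j
        rw [add_zero]
        norm_num
      rw [harc]
      have hZwalk : isFullWalk A k i s Z := by
        refine ⟨by rw [hYZ]; exact hsplit.1, hZlen, ?_, hZlast⟩
        rw [← List.head?_append_of_ne_nil Z (l₂ := [j]) hZne, ← hZW]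
        exact hh
      have h1 : tw A 0 (Y ++ [s]) ≤ Gamma A k i s := by
        rw [ih i s]
        exact le_sSup ⟨Z, hZwalk, by rw [hYZ]⟩
      rw [hGdef]
      exact le_trans (add_le_add h1 (le_refl _))
        (le_iSup (fun s' => Gamma A k i s' + A (k+1) s' j) s)
end GammaSup
section Walks
variable {m : ℕ} {A : Fin m → Fin m → EReal}

lemma wWeight_append (A : Fin m → Fin m → EReal) (x : Fin m) (W₁ W₂ : List (Fin m)) :
    wWeight A (W₁ ++ x :: W₂) = wWeight A (W₁ ++ [x]) + wWeight A (x :: W₂) := by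
  show tw (fun _ => A) 0 _ = _
  rw [tw_append, tw_const, tw_const]

lemma isWalk_append (x : Fin m) (W₁ W₂ : List (Fin m)) :
    isWalk A (W₁ ++ x :: W₂) ↔ isWalk A (W₁ ++ [x]) ∧ isWalk A (x :: W₂) := by
  show twalk (fun _ => A) 0 _ ↔ _
  rw [twalk_append, twalk_const, twalk_const]

lemma wWeight_real (htop : ∀ i j, A i j ≠ ⊤) {W : List (Fin m)} (hw : isWalk A W) :
    ∃ r : ℝ, wWeight A W = (r : EReal) :=
  tw_real W 0 (fun _ => htop) hw

lemma wWeight_all_eq {z : Fin m} (hz : A z z = 0) :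
    ∀ W : List (Fin m), (∀ v ∈ W, v = z) → wWeight A W = 0 := by
  intro W
  induction W with
  | nil => intro _; rfl
  | cons a W ih =>
    intro h
    cases W with
    | nil => rfl
    | cons b t =>
      have e : wWeight A (a :: b :: t) = A a b + wWeight A (b :: t) := by
        show tw (fun _ => A) 0 _ = _
        rw [show tw (fun _ => A) 0 (a :: b :: t)
          = A a b + tw (fun _ => A) 1 (b :: t) from rfl, tw_const]
      rw [e, ih (fun v hv => h v (by simp [hv])), add_zero, h a (by simp), h b (by simp), hz]

lemma closed_walk_nonpos {z : Fin m} (hz : A z z = 0)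
    (hneg : ∀ W, isCycle A W → (∃ v ∈ W, v ≠ z) → wWeight A W < 0)
    {W : List (Fin m)} (hw : isWalk A W)
    (hh : W.head? = some z) (hl : W.getLast? = some z) :
    wWeight A W ≤ 0 := by
  rcases Nat.lt_or_ge W.length 2 with hlen | hlen
  · interval_cases h : W.length
    · rw [List.length_eq_zero_iff.mp h]; exact le_of_eq rfl
    · obtain ⟨a, rfl⟩ := List.length_eq_one_iff.mp h
      exact le_of_eq rfl
  · by_cases hex : ∃ v ∈ W, v ≠ z
    · exact le_of_lt (hneg W ⟨hw, hlen, hh.trans hl.symm⟩ hex)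
    · push_neg at hex
      rw [wWeight_all_eq hz W hex]

end Walks

section Cycles
variable {m : ℕ} {Asup : Fin m → Fin m → EReal} {z : Fin m}

lemma cycle_split {C : List (Fin m)} (hC : isCycle Asup C) (hav : ∀ v ∈ C, v ≠ z)
    (hdup : ¬ C.dropLast.Nodup) :
    ∃ C₁ C₂ : List (Fin m), isCycle Asup C₁ ∧ isCycle Asup C₂ ∧
      (∀ v ∈ C₁, v ≠ z) ∧ (∀ v ∈ C₂, v ≠ z) ∧
      C₁.length < C.length ∧ C₂.length < C.length ∧
      C₁.length + C₂.length = C.length + 1 ∧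
      wWeight Asup C = wWeight Asup C₁ + wWeight Asup C₂ := by
  obtain ⟨hwalk, hlen2, hcl⟩ := hC
  have hCne : C ≠ [] := by intro h; rw [h] at hlen2; simp at hlen2
  obtain ⟨v, p, q, r, hd⟩ := exists_dup_split hdup
  have hCeq : C = p ++ v :: (q ++ v :: (r ++ [C.getLast hCne])) := by
    conv_lhs => rw [← List.dropLast_append_getLast hCne, hd]
    simp
  set zl := C.getLast hCne with hzl
  have hlast : C.getLast? = some zl := List.getLast?_eq_getLast hCne
  refine ⟨v :: (q ++ [v]), p ++ v :: (r ++ [zl]), ?_, ?_, ?_, ?_, ?_, ?_, ?_, ?_⟩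
  case refine_8 =>
    rw [hCeq, wWeight_append Asup v p (q ++ v :: (r ++ [zl]))]
    rw [show (v :: (q ++ v :: (r ++ [zl]))) = (v :: q) ++ v :: (r ++ [zl]) from by simp]
    rw [wWeight_append Asup v (v :: q) (r ++ [zl])]
    rw [wWeight_append Asup v p (r ++ [zl])]
    rw [show ((v :: q) ++ [v]) = v :: (q ++ [v]) from by simp]
    abel
  case refine_1 =>
    have hw2 : isWalk Asup (v :: (q ++ v :: (r ++ [zl]))) :=
      ((isWalk_append v p _).mp (by rw [← hCeq]; exact hwalk)).2
    have hw3 := (isWalk_append v (v :: q) (r ++ [zl])).mp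
      (by rw [show (v :: q) ++ v :: (r ++ [zl]) = v :: (q ++ v :: (r ++ [zl])) from by simp]
          exact hw2)
    refine ⟨by rw [show v :: (q ++ [v]) = (v::q) ++ [v] from by simp]; exact hw3.1, by simp, ?_⟩
    rw [show v :: (q ++ [v]) = (v::q) ++ [v] from by simp, List.getLast?_concat]
    simp
  case refine_2 =>
    have hw1 := (isWalk_append v p (q ++ v :: (r ++ [zl]))).mp (by rw [← hCeq]; exact hwalk)
    have hw2 := (isWalk_append v (v :: q) (r ++ [zl])).mp
      (by rw [show (v :: q) ++ v :: (r ++ [zl]) = v :: (q ++ v :: (r ++ [zl])) from by simp]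
          exact hw1.2)
    refine ⟨(isWalk_append v p (r ++ [zl])).mpr ⟨hw1.1, hw2.2⟩, by simp; omega, ?_⟩
    have hh2 : (p ++ v :: (r ++ [zl])).head? = C.head? := by
      rw [hCeq]; exact head?_append_cons p v _ _
    rw [hh2, hcl, hlast]
    rw [show p ++ v :: (r ++ [zl]) = (p ++ v :: r) ++ [zl] from by simp, List.getLast?_concat]
  case refine_3 =>
    intro x hx
    apply hav
    rw [hCeq]
    simp at hx ⊢
    tauto
  case refine_4 =>
    intro x hx
    apply hav
    rw [hCeq]
    simp at hx ⊢
    tauto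
  case refine_5 =>
    rw [hCeq]; simp; omega
  case refine_6 =>
    rw [hCeq]; simp
  case refine_7 =>
    rw [hCeq]; simp; omega

end Cycles
section Lam
variable {m : ℕ} {Asup : Fin m → Fin m → EReal} {z : Fin m}

lemma cycle_shorten (hcyc : ∃ W, isCycle Asup W ∧ ∀ v ∈ W, v ≠ z) :
    ∃ W, isCycle Asup W ∧ (∀ v ∈ W, v ≠ z) ∧ W.length ≤ m + 1 := by
  suffices h : ∀ N (C : List (Fin m)), C.length ≤ N → isCycle Asup C → (∀ v ∈ C, v ≠ z) →
      ∃ W, isCycle Asup W ∧ (∀ v ∈ W, v ≠ z) ∧ W.length ≤ m + 1 by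
    obtain ⟨C, hC, hav⟩ := hcyc
    exact h C.length C (le_refl _) hC hav
  intro N
  induction N with
  | zero => intro C hN hC hav; exact absurd (hC.2.1.trans hN) (by omega)
  | succ N ihN =>
    intro C hN hC hav
    by_cases hshort : C.length ≤ m + 1
    · exact ⟨C, hC, hav, hshort⟩
    · have hdup : ¬ C.dropLast.Nodup := by
        intro hnd
        have := List.Nodup.length_le_card hnd
        rw [List.length_dropLast, Fintype.card_fin] at this
        omega
      obtain ⟨C₁, C₂, h1, h2, ha1, ha2, hl1, hl2, hsum, hwt⟩ := cycle_split hC hav hdup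
      exact ihN C₁ (by omega) h1 ha1

lemma lam_facts (htop : ∀ i j, Asup i j ≠ ⊤)
    (hneg : ∀ W, isCycle Asup W → (∃ v ∈ W, v ≠ z) → wWeight Asup W < 0)
    (hcyc : ∃ W, isCycle Asup W ∧ ∀ v ∈ W, v ≠ z) :
    lamStar Asup z < 0 ∧
    ∀ C, isCycle Asup C → (∀ v ∈ C, v ≠ z) →
      ∀ r : ℝ, wWeight Asup C = (r : EReal) → r ≤ lamStar Asup z * ((C.length : ℝ) - 1) := by
  classical
  -- the finite set of mean weights of short cycles avoiding z
  set S : Set ℝ := {x : ℝ | ∃ C, isCycle Asup C ∧ (∀ v ∈ C, v ≠ z) ∧ C.length ≤ m + 1 ∧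
    x = (wWeight Asup C).toReal / ((C.length : ℝ) - 1)} with hSdef
  have hSfin : S.Finite := by
    have h1 : {l : List (Fin m) | l.length ≤ m + 1}.Finite := List.finite_length_le _ (m+1)
    apply (h1.image (fun l => (wWeight Asup l).toReal / ((l.length : ℝ) - 1))).subset
    rintro x ⟨C, hC, hav, hlen, rfl⟩
    exact ⟨C, hlen, rfl⟩
  -- real weight of a cycle, and negativity
  have hreal : ∀ C, isCycle Asup C → (∀ v ∈ C, v ≠ z) →
      ∃ r : ℝ, wWeight Asup C = (r : EReal) ∧ r < 0 := by
    intro C hC hav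
    obtain ⟨r, hr⟩ := wWeight_real htop hC.1
    refine ⟨r, hr, ?_⟩
    have hCne : C ≠ [] := by intro h; have := hC.2.1; rw [h] at this; simp at this
    have hex : ∃ v ∈ C, v ≠ z := by
      obtain ⟨c, hc⟩ := List.exists_mem_of_ne_nil C hCne
      exact ⟨c, hc, hav c hc⟩
    have := hneg C hC hex
    rw [hr] at this
    exact_mod_cast this
  have hSneg : ∀ x ∈ S, x < 0 := by
    rintro x ⟨C, hC, hav, hlen, rfl⟩
    obtain ⟨r, hr, hrneg⟩ := hreal C hC hav
    rw [hr, EReal.toReal_coe]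
    apply div_neg_of_neg_of_pos hrneg
    have := hC.2.1
    have : (2:ℝ) ≤ (C.length : ℝ) := by exact_mod_cast this
    linarith
  have hSne : S.Nonempty := by
    obtain ⟨C, hC, hav, hlen⟩ := cycle_shorten hcyc
    exact ⟨_, C, hC, hav, hlen, rfl⟩
  set mu := sSup S with hmu
  have hmuS : mu ∈ S := hSne.csSup_mem hSfin
  have hmuneg : mu < 0 := hSneg mu hmuS
  have hbddS : BddAbove S := hSfin.bddAbove
  -- every cycle avoiding z has weight at most mu * (length - 1)
  have hbound' : ∀ N C, C.length ≤ N → isCycle Asup C → (∀ v ∈ C, v ≠ z) →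
      ∀ r : ℝ, wWeight Asup C = (r : EReal) → r ≤ mu * ((C.length : ℝ) - 1) := by
    intro N
    induction N with
    | zero => intro C hN hC hav; exact absurd (hC.2.1.trans hN) (by omega)
    | succ N ihN =>
      intro C hN hC hav r hr
      by_cases hshort : C.length ≤ m + 1
      · have hmem : (wWeight Asup C).toReal / ((C.length : ℝ) - 1) ∈ S :=
          ⟨C, hC, hav, hshort, rfl⟩
        have hle : (wWeight Asup C).toReal / ((C.length : ℝ) - 1) ≤ mu := le_csSup hbddS hmem
        rw [hr, EReal.toReal_coe] at hle
        have hpos : (0:ℝ) < (C.length : ℝ) - 1 := by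
          have := hC.2.1
          have : (2:ℝ) ≤ (C.length : ℝ) := by exact_mod_cast this
          linarith
        calc r = (r / ((C.length : ℝ) - 1)) * ((C.length : ℝ) - 1) := by field_simp
          _ ≤ mu * ((C.length : ℝ) - 1) := by
              apply mul_le_mul_of_nonneg_right hle (le_of_lt hpos)
      · have hdup : ¬ C.dropLast.Nodup := by
          intro hnd
          have := List.Nodup.length_le_card hnd
          rw [List.length_dropLast, Fintype.card_fin] at this
          omega
        obtain ⟨C₁, C₂, h1, h2, ha1, ha2, hl1, hl2, hsum, hwt⟩ := cycle_split hC hav hdup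
        obtain ⟨r₁, hr₁, _⟩ := hreal C₁ h1 ha1
        obtain ⟨r₂, hr₂, _⟩ := hreal C₂ h2 ha2
        have hr12 : r = r₁ + r₂ := by
          rw [hr, hr₁, hr₂, ← EReal.coe_add] at hwt
          exact_mod_cast hwt
        have hb1 := ihN C₁ (by omega) h1 ha1 r₁ hr₁
        have hb2 := ihN C₂ (by omega) h2 ha2 r₂ hr₂
        have hcast : ((C₁.length : ℝ) - 1) + ((C₂.length : ℝ) - 1) = (C.length : ℝ) - 1 := by
          have : (C₁.length : ℝ) + (C₂.length : ℝ) = (C.length : ℝ) + 1 := by exact_mod_cast hsum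
          linarith
        rw [hr12]
        calc r₁ + r₂ ≤ mu * ((C₁.length : ℝ) - 1) + mu * ((C₂.length : ℝ) - 1) :=
              add_le_add hb1 hb2
          _ = mu * ((C.length : ℝ) - 1) := by rw [← mul_add, hcast]
  have hbound : ∀ C, isCycle Asup C → (∀ v ∈ C, v ≠ z) →
      ∀ r : ℝ, wWeight Asup C = (r : EReal) → r ≤ mu * ((C.length : ℝ) - 1) :=
    fun C hC hav => hbound' C.length C (le_refl _) hC hav
  -- relate to lamStar
  have hlamsub : ∀ x ∈ lamSet Asup z, x ≤ mu := by
    rintro x ⟨W, hW, hav, r, hr, rfl⟩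
    have hb := hbound W hW hav r hr
    have hpos : (0:ℝ) < (W.length : ℝ) - 1 := by
      have := hW.2.1
      have : (2:ℝ) ≤ (W.length : ℝ) := by exact_mod_cast this
      linarith
    rw [div_le_iff₀ hpos]
    linarith [hb]
  have hlamne : (lamSet Asup z).Nonempty := by
    obtain ⟨C, hC, hav⟩ := hcyc
    obtain ⟨r, hr, _⟩ := hreal C hC hav
    exact ⟨r / ((C.length : ℝ) - 1), C, hC, hav, r, hr, rfl⟩
  have hbddlam : BddAbove (lamSet Asup z) := ⟨mu, hlamsub⟩
  have hlammu : lamStar Asup z ≤ mu := csSup_le hlamne hlamsub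
  refine ⟨lt_of_le_of_lt hlammu hmuneg, ?_⟩
  intro C hC hav r hr
  have hmem : r / ((C.length : ℝ) - 1) ∈ lamSet Asup z := ⟨C, hC, hav, r, hr, rfl⟩
  have hle : r / ((C.length : ℝ) - 1) ≤ lamStar Asup z := le_csSup hbddlam hmem
  have hpos : (0:ℝ) < (C.length : ℝ) - 1 := by
    have := hC.2.1
    have : (2:ℝ) ≤ (C.length : ℝ) := by exact_mod_cast this
    linarith
  rw [div_le_iff₀ hpos] at hle
  linarith

end Lam
section CR
variable {m : ℕ} {Asup : Fin m → Fin m → EReal} {z : Fin m}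

lemma cycle_removal (htop : ∀ i j, Asup i j ≠ ⊤) (lam : ℝ)
    (hlam : ∀ C, isCycle Asup C → (∀ v ∈ C, v ≠ z) →
      ∀ r : ℝ, wWeight Asup C = (r : EReal) → r ≤ lam * ((C.length : ℝ) - 1)) :
    ∀ N (W : List (Fin m)), W.length ≤ N → isWalk Asup W → W.count z ≤ 1 →
      z ∉ W.dropLast.tail →
      ∃ P, isPath Asup P ∧ P.head? = W.head? ∧ P.getLast? = W.getLast? ∧
        (∀ x ∈ P, x ∈ W) ∧ P.length ≤ W.length ∧
        ∀ rW rP : ℝ, wWeight Asup W = (rW : EReal) → wWeight Asup P = (rP : EReal) →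
          rW ≤ rP + lam * ((W.length : ℝ) - (P.length : ℝ)) := by
  intro N
  induction N with
  | zero =>
    intro W hN hw hcnt hint
    have hWnil : W = [] := List.length_eq_zero_iff.mp (by omega)
    subst hWnil
    exact hw.elim
  | succ N ihN =>
    intro W hN hw hcnt hint
    by_cases hnd : W.Nodup
    · refine ⟨W, ⟨hw, hnd⟩, rfl, rfl, fun x hx => hx, le_refl _, ?_⟩
      intro rW rP hrW hrP
      rw [hrW] at hrP
      have : rW = rP := by exact_mod_cast hrP
      simp [this]
    · obtain ⟨v, l₁, l₂, l₃, hWeq⟩ := exists_dup_split hnd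
      have hvz : v ≠ z := by
        intro hvzeq
        subst hvzeq
        rw [hWeq] at hcnt
        simp only [List.count_append, List.count_cons_self] at hcnt
        omega
      set C := v :: (l₂ ++ [v]) with hCdef
      set W' := l₁ ++ v :: l₃ with hW'def
      have e1 : W = l₁ ++ v :: (l₂ ++ v :: l₃) := by simp [hWeq]
      have e2 : W = (l₁ ++ v :: l₂) ++ (v :: l₃) := by simp [hWeq]
      have hWeq3 : W = (l₁ ++ [v]) ++ (l₂ ++ [v]) ++ l₃ := by simp [hWeq]
      have hWeq4 : W = (l₁ ++ [v]) ++ l₂ ++ (v :: l₃) := by simp [hWeq]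
      have hW'eq2 : W' = (l₁ ++ [v]) ++ l₃ := by simp [hW'def]
      have hsplit1 : isWalk Asup (l₁ ++ [v]) ∧ isWalk Asup (v :: (l₂ ++ v :: l₃)) := by
        rw [← isWalk_append]
        rw [← e1]
        exact hw
      have hsplit2 : isWalk Asup ((v :: l₂) ++ [v]) ∧ isWalk Asup (v :: l₃) := by
        rw [← isWalk_append]
        rw [show (v :: l₂) ++ v :: l₃ = v :: (l₂ ++ v :: l₃) from by simp]
        exact hsplit1.2
      have hCwalk : isWalk Asup C := by
        rw [hCdef, show v :: (l₂ ++ [v]) = (v :: l₂) ++ [v] from by simp]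
        exact hsplit2.1
      have hW'walk : isWalk Asup W' := (isWalk_append v l₁ l₃).mpr ⟨hsplit1.1, hsplit2.2⟩
      have hCcyc : isCycle Asup C := by
        refine ⟨hCwalk, by simp [hCdef], ?_⟩
        rw [hCdef, show v :: (l₂ ++ [v]) = (v :: l₂) ++ [v] from by simp,
          List.getLast?_concat]
        simp
      have hCav : ∀ x ∈ C, x ≠ z := by
        intro x hx
        rw [hCdef] at hx
        simp at hx
        rcases hx with rfl | hx | rfl
        · exact hvz
        · intro hxz
          subst hxz
          apply hint
          rw [hWeq4]
          exact mem_interior_of_mem_mid (by simp) (by simp) hx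
        · exact hvz
      have hwtW : wWeight Asup W
          = wWeight Asup (l₁ ++ [v]) + (wWeight Asup C + wWeight Asup (v :: l₃)) := by
        rw [e1, wWeight_append Asup v l₁ (l₂ ++ v :: l₃),
          show v :: (l₂ ++ v :: l₃) = (v :: l₂) ++ v :: l₃ from by simp,
          wWeight_append Asup v (v :: l₂) l₃,
          show (v :: l₂) ++ [v] = v :: (l₂ ++ [v]) from by simp]
      have hwtW' : wWeight Asup W' = wWeight Asup (l₁ ++ [v]) + wWeight Asup (v :: l₃) :=
        wWeight_append Asup v l₁ l₃
      obtain ⟨rA, hrA⟩ := wWeight_real htop hsplit1.1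
      obtain ⟨rC, hrC⟩ := wWeight_real htop hCwalk
      obtain ⟨rB, hrB⟩ := wWeight_real htop hsplit2.2
      have hrW' : wWeight Asup W' = ((rA + rB : ℝ) : EReal) := by
        rw [hwtW', hrA, hrB]
        norm_cast
      have hlenW : W.length = l₁.length + l₂.length + l₃.length + 2 := by
        rw [hWeq]; simp; omega
      have hlenW' : W'.length = l₁.length + l₃.length + 1 := by
        rw [hW'def]; simp; omega
      have hcnt' : W'.count z ≤ 1 := by
        refine le_trans ?_ hcnt
        rw [hW'def, hWeq]
        simp only [List.count_append]
        omega
      have hint' : z ∉ W'.dropLast.tail := by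
        intro hmem
        apply hint
        rw [hWeq3]
        apply mem_interior_insert (by simp) (by simp)
        rw [← hW'eq2]
        exact hmem
      have hh' : W'.head? = W.head? := by
        rw [hW'def, e1]
        exact head?_append_cons l₁ v l₃ (l₂ ++ v :: l₃)
      have hl' : W'.getLast? = W.getLast? := by
        rw [hW'def, e2, List.getLast?_append_of_ne_nil _ (by simp),
          List.getLast?_append_of_ne_nil _ (l₂ := v :: l₃) (by simp)]
      obtain ⟨P, hP, hPh, hPl, hPmem, hPlen, hPwt⟩ :=
        ihN W' (by omega) hW'walk hcnt' hint'
      refine ⟨P, hP, hPh.trans hh', hPl.trans hl', ?_, by omega, ?_⟩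
      · intro x hx
        have hx' := hPmem x hx
        rw [hW'def] at hx'
        rw [hWeq]
        simp at hx' ⊢
        tauto
      · intro rW rP hrW hrP
        have hrWsum : rW = rA + (rC + rB) := by
          rw [hwtW, hrA, hrC, hrB] at hrW
          exact_mod_cast hrW.symm
        have hW'bound := hPwt (rA + rB) rP hrW' hrP
        have hCbound := hlam C hCcyc hCav rC hrC
        have hClen : ((C.length : ℝ) - 1) = (l₂.length : ℝ) + 1 := by
          rw [hCdef]; push_cast; simp
        rw [hClen] at hCbound
        have key : lam * ((W.length : ℝ) - (P.length : ℝ))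
            = lam * ((W'.length : ℝ) - (P.length : ℝ)) + lam * ((l₂.length : ℝ) + 1) := by
          rw [← mul_add]
          congr 1
          rw [hlenW, hlenW']
          push_cast
          ring
        rw [hrWsum, key]
        linarith
end CR
section Trellis
variable {m k : ℕ} {𝒳 : Set (Fin m → Fin m → EReal)} {Asup : Fin m → Fin m → EReal}
  {A : ℕ → Fin m → Fin m → EReal} {z : Fin m}

lemma le_Asup_of_mem (hsup : ∀ i j, Asup i j = ⨆ X ∈ 𝒳, X i j) {X} (hX : X ∈ 𝒳) :
    ∀ a b, X a b ≤ Asup a b := fun a b => by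
  rw [hsup]; exact le_biSup (fun X => X a b) hX

lemma trellis_tw_le (hsup : ∀ i j, Asup i j = ⨆ X ∈ 𝒳, X i j)
    (hA : ∀ l, 1 ≤ l → l ≤ k → A l ∈ 𝒳) (s : ℕ) (U : List (Fin m))
    (hrange : s + U.length ≤ k + 1) :
    tw A s U ≤ wWeight Asup U := by
  calc tw A s U ≤ tw (fun _ => Asup) s U :=
        tw_mono U s (fun l h1 h2 a b =>
          le_Asup_of_mem hsup (hA l (by omega) (by omega)) a b)
    _ = wWeight Asup U := tw_const Asup U s

lemma trellis_walk_isWalk (hsup : ∀ i j, Asup i j = ⨆ X ∈ 𝒳, X i j)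
    (hA : ∀ l, 1 ≤ l → l ≤ k → A l ∈ 𝒳) (s : ℕ) (U : List (Fin m))
    (hrange : s + U.length ≤ k + 1) (hw : twalk A s U) : isWalk Asup U := by
  have := twalk_mono U s (fun l h1 h2 a b =>
    le_Asup_of_mem hsup (hA l (by omega) (by omega)) a b) hw
  exact (twalk_const Asup U s).mp this

lemma closed_piece_nonpos (hsup : ∀ i j, Asup i j = ⨆ X ∈ 𝒳, X i j)
    (hsup1 : Asup z z = 0)
    (hcycS : ∀ W, isCycle Asup W → (∃ v ∈ W, v ≠ z) → wWeight Asup W < 0)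
    (hA : ∀ l, 1 ≤ l → l ≤ k → A l ∈ 𝒳) (s : ℕ) (U : List (Fin m))
    (hrange : s + U.length ≤ k + 1) (hw : twalk A s U)
    (hh : U.head? = some z) (hl : U.getLast? = some z) :
    tw A s U ≤ 0 :=
  le_trans (trellis_tw_le hsup hA s U hrange)
    (closed_walk_nonpos hsup1 hcycS (trellis_walk_isWalk hsup hA s U hrange hw) hh hl)

end Trellis
/-- the main theorem, entrywise form (with the implicit bound). -/
theorem rank_one_transient_statement4 {n : ℕ}
    (𝒳 : Set (Fin (n + 2) → Fin (n + 2) → EReal))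
    (Asup Ainf : Fin (n + 2) → Fin (n + 2) → EReal)
    (hstand : Standing 𝒳 Asup Ainf 0)
    (k : ℕ) (hk : 1 ≤ k)
    (A : ℕ → Fin (n + 2) → Fin (n + 2) → EReal)
    (hA : ∀ l, 1 ≤ l → l ≤ k → A l ∈ 𝒳)
    (hcyc : ∃ W, isCycle Asup W ∧ ∀ v ∈ W, v ≠ (0 : Fin (n + 2)))
    (i j : Fin (n + 2))
    (a : ℝ) (ha : (a : EReal) = alphaE Asup 0 i)
    (b : ℝ) (hb : (b : EReal) = betaE Asup 0 j)
    (w : ℝ) (hw : (w : EReal) = wStar A 0 k i)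
    (v : ℝ) (hv : (v : EReal) = vStar A 0 k j)
    -- the term involving `γ_{i,j}` is omitted from the maximum if `γ_{i,j} = -∞`
    (hk1 : ∀ g : ℝ, gammaE Asup 0 i j = (g : EReal) →
      (k : ℝ) > (w + v - g) / lamStar Asup 0 + ((n + 2 : ℝ) - 1))
    (hk2 : (k : ℝ) > (w - a + v - b) / lamStar Asup 0 + 2 * ((n + 2 : ℝ) - 1)) :
    Gamma A k i j = Gamma A k i 0 + Gamma A k 0 j := by
  obtain ⟨hXne, hXtop, hsup, hinf, hstop, hbotX, hirr, hirrinf, hgeom, hone, hcycX, hsup1,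
    hcycS⟩ := hstand
  obtain ⟨hlamneg, hlam⟩ := lam_facts hstop hcycS hcyc
  have hlamne0 : lamStar Asup 0 ≠ 0 := ne_of_lt hlamneg
  have hzA : ∀ l, 1 ≤ l → l ≤ k → A l 0 0 = 0 := fun l h1 h2 => hone _ (hA l h1 h2)
  -- attainment of w*
  have hwfin : {x : EReal | ∃ W, isInitialWalk A 0 k i W ∧ x = tw A 0 W}.Finite :=
    finite_weight_set (k+1) _ (fun W hW => by have := hW.2.1; omega) _
  have hwne : {x : EReal | ∃ W, isInitialWalk A 0 k i W ∧ x = tw A 0 W}.Nonempty := by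
    by_contra hcon
    rw [Set.not_nonempty_iff_eq_empty] at hcon
    rw [wStar, hcon, sSup_empty] at hw
    exact EReal.coe_ne_bot w hw
  obtain ⟨W₀, hW₀, hW₀val⟩ := hwne.csSup_mem hwfin
  have hwval : (w : EReal) = tw A 0 W₀ := by rw [hw, wStar]; exact hW₀val
  obtain ⟨hW₀walk, hW₀len, hW₀head, hW₀last, hW₀avoid⟩ := hW₀
  obtain ⟨Y, hYW₀⟩ := eq_concat_of_getLast? hW₀last
  have hW₀length : W₀.length = Y.length + 1 := by rw [hYW₀]; simp
  have hd₁k : Y.length ≤ k := by omega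
  -- attainment of v*
  have hvfin : {x : EReal | ∃ s W, isFinalWalk A 0 k j s W ∧ x = tw A s W}.Finite :=
    finite_weight_set2 (k+1) k _ (fun s W hW => ⟨by have := hW.2.1; omega,
      by have := hW.2.1; omega⟩) _
  have hvne : {x : EReal | ∃ s W, isFinalWalk A 0 k j s W ∧ x = tw A s W}.Nonempty := by
    by_contra hcon
    rw [Set.not_nonempty_iff_eq_empty] at hcon
    rw [vStar, hcon, sSup_empty] at hv
    exact EReal.coe_ne_bot v hv
  obtain ⟨s₂, W₂, hW₂, hW₂val⟩ := hvne.csSup_mem hvfin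
  have hvval : (v : EReal) = tw A s₂ W₂ := by rw [hv, vStar]; exact hW₂val
  obtain ⟨hW₂walk, hW₂len, hW₂head, hW₂last, hW₂avoid⟩ := hW₂
  obtain ⟨T, hTW₂⟩ : ∃ T, W₂ = (0 : Fin (n+2)) :: T := by
    cases W₂ with
    | nil => simp at hW₂head
    | cons c T =>
      have : c = 0 := by injection hW₂head
      exact ⟨T, by rw [this]⟩
  have hW₂length : W₂.length = T.length + 1 := by rw [hTW₂]; simp
  have hs₂ : s₂ + T.length = k := by omega
  -- CR on W₀
  have h0Y : (0:Fin (n+2)) ∉ Y := by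
    intro h0
    exact hW₀avoid 0 (by rw [hYW₀, List.dropLast_concat]; exact h0) rfl
  have hW₀count : W₀.count 0 ≤ 1 := by
    rw [hYW₀]
    simp [List.count_append, List.count_eq_zero_of_not_mem h0Y]
  have hW₀int : (0:Fin (n+2)) ∉ W₀.dropLast.tail := by
    intro h0
    exact hW₀avoid 0 (List.mem_of_mem_tail h0) rfl
  have hW₀range : 0 + W₀.length ≤ k + 1 := by omega
  have hW₀Asup : isWalk Asup W₀ := trellis_walk_isWalk hsup hA 0 W₀ hW₀range hW₀walk
  obtain ⟨P₁, hP₁, hP₁h, hP₁l, hP₁mem, hP₁len, hP₁wt⟩ :=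
    cycle_removal hstop _ hlam W₀.length W₀ le_rfl hW₀Asup hW₀count hW₀int
  obtain ⟨rW₁, hrW₁⟩ := wWeight_real hstop hW₀Asup
  obtain ⟨rP₁, hrP₁⟩ := wWeight_real hstop hP₁.1
  have hwle : w ≤ rW₁ := by
    have h1 : (w:EReal) ≤ (rW₁:EReal) := by
      rw [hwval, ← hrW₁]; exact trellis_tw_le hsup hA 0 W₀ hW₀range
    exact_mod_cast h1
  have hrP₁a : rP₁ ≤ a := by
    have h1 : (rP₁:EReal) ≤ (a:EReal) := by
      rw [ha, ← hrP₁]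
      unfold alphaE
      exact le_sSup ⟨P₁, hP₁, hP₁h.trans hW₀head, hP₁l.trans hW₀last, rfl⟩
    exact_mod_cast h1
  have hP₁card : P₁.length ≤ n + 2 := by
    have := List.Nodup.length_le_card hP₁.2
    simpa using this
  have hkey1 : w ≤ a + lamStar Asup 0 * ((Y.length:ℝ) - ((n:ℝ)+1)) := by
    have hb1 := hP₁wt rW₁ rP₁ hrW₁ hrP₁
    have hmul : lamStar Asup 0 * ((W₀.length:ℝ) - (P₁.length:ℝ))
        ≤ lamStar Asup 0 * ((Y.length:ℝ) - ((n:ℝ)+1)) := by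
      apply mul_le_mul_of_nonpos_left _ (le_of_lt hlamneg)
      have h1 : (P₁.length : ℝ) ≤ (n:ℝ) + 2 := by exact_mod_cast hP₁card
      have h2 : (W₀.length : ℝ) = (Y.length:ℝ) + 1 := by exact_mod_cast hW₀length
      linarith
    linarith
  -- CR on W₂
  have h0T : (0:Fin (n+2)) ∉ T := by
    intro h0
    exact hW₂avoid 0 (by rw [hTW₂]; exact h0) rfl
  have hW₂count : W₂.count 0 ≤ 1 := by
    rw [hTW₂]
    simp [List.count_cons, List.count_eq_zero_of_not_mem h0T]
  have hW₂int : (0:Fin (n+2)) ∉ W₂.dropLast.tail := by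
    intro h0
    exact hW₂avoid 0 (mem_tail_of_mem_dropLast_tail W₂ h0) rfl
  have hW₂range : s₂ + W₂.length ≤ k + 1 := by omega
  have hW₂Asup : isWalk Asup W₂ := trellis_walk_isWalk hsup hA s₂ W₂ hW₂range hW₂walk
  obtain ⟨P₂, hP₂, hP₂h, hP₂l, hP₂mem, hP₂len, hP₂wt⟩ :=
    cycle_removal hstop _ hlam W₂.length W₂ le_rfl hW₂Asup hW₂count hW₂int
  obtain ⟨rW₂, hrW₂⟩ := wWeight_real hstop hW₂Asup
  obtain ⟨rP₂, hrP₂⟩ := wWeight_real hstop hP₂.1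
  have hvle : v ≤ rW₂ := by
    have h1 : (v:EReal) ≤ (rW₂:EReal) := by
      rw [hvval, ← hrW₂]; exact trellis_tw_le hsup hA s₂ W₂ hW₂range
    exact_mod_cast h1
  have hrP₂b : rP₂ ≤ b := by
    have h1 : (rP₂:EReal) ≤ (b:EReal) := by
      rw [hb, ← hrP₂]
      unfold betaE
      exact le_sSup ⟨P₂, hP₂, hP₂h.trans (by rw [hTW₂]; rfl), hP₂l.trans hW₂last, rfl⟩
    exact_mod_cast h1
  have hP₂card : P₂.length ≤ n + 2 := by
    have := List.Nodup.length_le_card hP₂.2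
    simpa using this
  have hkey2 : v ≤ b + lamStar Asup 0 * ((T.length:ℝ) - ((n:ℝ)+1)) := by
    have hb2 := hP₂wt rW₂ rP₂ hrW₂ hrP₂
    have hmul : lamStar Asup 0 * ((W₂.length:ℝ) - (P₂.length:ℝ))
        ≤ lamStar Asup 0 * ((T.length:ℝ) - ((n:ℝ)+1)) := by
      apply mul_le_mul_of_nonpos_left _ (le_of_lt hlamneg)
      have h1 : (P₂.length : ℝ) ≤ (n:ℝ) + 2 := by exact_mod_cast hP₂card
      have h2 : (W₂.length : ℝ) = (T.length:ℝ) + 1 := by exact_mod_cast hW₂length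
      linarith
    linarith
  -- k exceeds d₁ + d₂
  have hdk : Y.length + T.length ≤ k := by
    by_contra hcon
    push_neg at hcon
    have h1 : (w - a + v - b) ≤ lamStar Asup 0 * ((Y.length:ℝ) + (T.length:ℝ) - 2*((n:ℝ)+1)) := by
      have e : lamStar Asup 0 * ((Y.length:ℝ) - ((n:ℝ)+1))
          + lamStar Asup 0 * ((T.length:ℝ) - ((n:ℝ)+1))
          = lamStar Asup 0 * ((Y.length:ℝ) + (T.length:ℝ) - 2*((n:ℝ)+1)) := by ring
      linarith
    have h3 : (w - a + v - b) / lamStar Asup 0 < (k:ℝ) - 2*((n:ℝ)+1) := by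
      push_cast at hk2
      linarith
    have h4 := mul_lt_mul_of_neg_left h3 hlamneg
    rw [mul_comm (lamStar Asup 0) ((w - a + v - b) / lamStar Asup 0),
      div_mul_cancel₀ _ hlamne0] at h4
    have h6 : lamStar Asup 0 * ((Y.length:ℝ)+(T.length:ℝ)-2*((n:ℝ)+1))
        < lamStar Asup 0 * ((k:ℝ)-2*((n:ℝ)+1)) := by
      apply mul_lt_mul_of_neg_left _ hlamneg
      have : (k:ℝ) < (Y.length:ℝ) + (T.length:ℝ) := by exact_mod_cast hcon
      linarith
    linarith
  -- EQ1 : Gamma A k i 0 = w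
  have hEQ1 : Gamma A k i 0 = (w : EReal) := by
    rw [Gamma_eq_sSup]
    apply le_antisymm
    · apply sSup_le
      rintro x ⟨W, ⟨hwW, hlenW, hhW, hlW⟩, rfl⟩
      obtain ⟨Z0, hZ0⟩ := eq_concat_of_getLast? hlW
      have h0mem : (0 : Fin (n+2)) ∈ W := by rw [hZ0]; simp
      obtain ⟨W₁, Wr, hWsplit, h0W₁⟩ := exists_first_split h0mem
      have hlen1 : W₁.length + Wr.length + 1 = k + 1 := by
        have := congrArg List.length hWsplit
        rw [hlenW] at this
        simp at this
        omega
      rw [hWsplit, tw_append, Nat.zero_add]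
      have hsplitwalk := (twalk_append A 0 Wr W₁ 0).mp (by rw [← hWsplit]; exact hwW)
      rw [Nat.zero_add] at hsplitwalk
      have ht1 : tw A 0 (W₁ ++ [(0:Fin (n+2))]) ≤ (w:EReal) := by
        rw [hw]
        apply le_sSup
        refine ⟨W₁ ++ [0], ⟨hsplitwalk.1, by simp; omega, ?_, List.getLast?_concat, ?_⟩, rfl⟩
        · rw [head?_append_cons W₁ 0 [] Wr, ← hWsplit]; exact hhW
        · rw [List.dropLast_concat]
          exact fun vv hvv hveq => h0W₁ (hveq ▸ hvv)
      have ht2 : tw A W₁.length ((0:Fin (n+2)) :: Wr) ≤ 0 := by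
        apply closed_piece_nonpos hsup hsup1 hcycS hA
        · simp; omega
        · exact hsplitwalk.2
        · rfl
        · rw [← List.getLast?_append_of_ne_nil W₁ (l₂ := (0:Fin (n+2)) :: Wr) (by simp),
            ← hWsplit]
          exact hlW
      calc tw A 0 (W₁ ++ [(0:Fin (n+2))]) + tw A W₁.length ((0:Fin (n+2)) :: Wr)
          ≤ (w:EReal) + 0 := add_le_add ht1 ht2
        _ = (w:EReal) := add_zero _
    · apply le_sSup
      have hz' : ∀ l, Y.length < l → l ≤ Y.length + (k - Y.length) → A l 0 0 = 0 :=
        fun l h1 h2 => hzA l (by omega) (by omega)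
      refine ⟨Y ++ (0:Fin (n+2)) :: List.replicate (k - Y.length) 0, ⟨?_, ?_, ?_, ?_⟩, ?_⟩
      · rw [twalk_append, Nat.zero_add]
        constructor
        · rw [← hYW₀]; exact hW₀walk
        · rw [show (0:Fin (n+2)) :: List.replicate (k - Y.length) 0
              = (0:Fin (n+2)) :: (List.replicate (k - Y.length) 0 ++ []) from by simp]
          exact (twalk_idle 0 [] (k - Y.length) Y.length hz').mpr trivial
      · simp; omega
      · rw [head?_append_cons Y 0 (List.replicate (k - Y.length) 0) [], ← hYW₀]
        exact hW₀head
      · rw [List.getLast?_append_of_ne_nil Y (by simp)]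
        have hgl := getLast?_idle (0:Fin (n+2)) (k - Y.length) []
        simpa using hgl
      · rw [tw_append, Nat.zero_add]
        have hidle : tw A Y.length ((0:Fin (n+2)) :: List.replicate (k - Y.length) 0) = 0 := by
          rw [show (0:Fin (n+2)) :: List.replicate (k - Y.length) 0
              = (0:Fin (n+2)) :: (List.replicate (k - Y.length) 0 ++ []) from by simp]
          rw [tw_idle 0 [] (k - Y.length) Y.length hz']
          rfl
        rw [hidle, add_zero, ← hYW₀]
        exact hwval
  -- EQ2 : Gamma A k 0 j = v
  have hEQ2 : Gamma A k 0 j = (v : EReal) := by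
    rw [Gamma_eq_sSup]
    apply le_antisymm
    · apply sSup_le
      rintro x ⟨W, ⟨hwW, hlenW, hhW, hlW⟩, rfl⟩
      have h0mem : (0 : Fin (n+2)) ∈ W := by
        cases W with
        | nil => simp at hhW
        | cons c T' =>
          have : c = 0 := by injection hhW
          simp [this]
      obtain ⟨W₁, Wr, hWsplit, h0Wr⟩ := exists_last_split h0mem
      have hlen1 : W₁.length + Wr.length + 1 = k + 1 := by
        have := congrArg List.length hWsplit
        rw [hlenW] at this
        simp at this
        omega
      rw [hWsplit, tw_append, Nat.zero_add]
      have hsplitwalk := (twalk_append A 0 Wr W₁ 0).mp (by rw [← hWsplit]; exact hwW)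
      rw [Nat.zero_add] at hsplitwalk
      have ht1 : tw A 0 (W₁ ++ [(0:Fin (n+2))]) ≤ 0 := by
        apply closed_piece_nonpos hsup hsup1 hcycS hA
        · simp; omega
        · exact hsplitwalk.1
        · rw [head?_append_cons W₁ 0 [] Wr, ← hWsplit]; exact hhW
        · exact List.getLast?_concat
      have ht2 : tw A W₁.length ((0:Fin (n+2)) :: Wr) ≤ (v:EReal) := by
        rw [hv]
        apply le_sSup
        refine ⟨W₁.length, (0:Fin (n+2)) :: Wr, ⟨hsplitwalk.2, by simp; omega, rfl, ?_, ?_⟩, rfl⟩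
        · rw [← List.getLast?_append_of_ne_nil W₁ (l₂ := (0:Fin (n+2)) :: Wr) (by simp),
            ← hWsplit]
          exact hlW
        · exact fun vv hvv hveq => h0Wr (hveq ▸ (by simpa using hvv))
      calc tw A 0 (W₁ ++ [(0:Fin (n+2))]) + tw A W₁.length ((0:Fin (n+2)) :: Wr)
          ≤ 0 + (v:EReal) := add_le_add ht1 ht2
        _ = (v:EReal) := zero_add _
    · apply le_sSup
      have hz' : ∀ l, 0 < l → l ≤ 0 + s₂ → A l 0 0 = 0 :=
        fun l h1 h2 => hzA l (by omega) (by omega)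
      refine ⟨(0:Fin (n+2)) :: (List.replicate s₂ 0 ++ T), ⟨?_, ?_, rfl, ?_⟩, ?_⟩
      · apply (twalk_idle 0 T s₂ 0 hz').mpr
        rw [Nat.zero_add]
        rw [hTW₂] at hW₂walk
        exact hW₂walk
      · simp; omega
      · rw [getLast?_idle, ← hTW₂]
        exact hW₂last
      · rw [tw_idle 0 T s₂ 0 hz', Nat.zero_add, ← hTW₂]
        exact hvval
  -- EQ3 : Gamma A k i j = w + v
  have hEQ3 : Gamma A k i j = (w : EReal) + (v : EReal) := by
    rw [Gamma_eq_sSup]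
    apply le_antisymm
    · apply sSup_le
      rintro x ⟨W, ⟨hwW, hlenW, hhW, hlW⟩, rfl⟩
      by_cases h0mem : (0 : Fin (n+2)) ∈ W
      · obtain ⟨W₁, Wr, hWsplit, h0W₁⟩ := exists_first_split h0mem
        have hlen1 : W₁.length + Wr.length + 1 = k + 1 := by
          have := congrArg List.length hWsplit
          rw [hlenW] at this
          simp at this
          omega
        rw [hWsplit, tw_append, Nat.zero_add]
        have hsplitwalk := (twalk_append A 0 Wr W₁ 0).mp (by rw [← hWsplit]; exact hwW)
        rw [Nat.zero_add] at hsplitwalk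
        have ht1 : tw A 0 (W₁ ++ [(0:Fin (n+2))]) ≤ (w:EReal) := by
          rw [hw]
          apply le_sSup
          refine ⟨W₁ ++ [0], ⟨hsplitwalk.1, by simp; omega, ?_, List.getLast?_concat, ?_⟩, rfl⟩
          · rw [head?_append_cons W₁ 0 [] Wr, ← hWsplit]; exact hhW
          · rw [List.dropLast_concat]
            exact fun vv hvv hveq => h0W₁ (hveq ▸ hvv)
        have h0mem2 : (0 : Fin (n+2)) ∈ (0:Fin (n+2)) :: Wr := by simp
        obtain ⟨u, T', husplit, h0T'⟩ := exists_last_split h0mem2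
        have hlen2 : u.length + T'.length = Wr.length := by
          have := congrArg List.length husplit
          simp at this
          omega
        rw [husplit, tw_append A (0:Fin (n+2)) T' u W₁.length]
        have hsplitwalk2 := (twalk_append A 0 T' u W₁.length).mp
          (by rw [← husplit]; exact hsplitwalk.2)
        have ht2 : tw A W₁.length (u ++ [(0:Fin (n+2))]) ≤ 0 := by
          apply closed_piece_nonpos hsup hsup1 hcycS hA
          · simp; omega
          · exact hsplitwalk2.1
          · rw [head?_append_cons u 0 [] T', ← husplit]; rfl
          · exact List.getLast?_concat
        have ht3 : tw A (W₁.length + u.length) ((0:Fin (n+2)) :: T') ≤ (v:EReal) := by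
          rw [hv]
          apply le_sSup
          refine ⟨W₁.length + u.length, (0:Fin (n+2)) :: T',
            ⟨hsplitwalk2.2, by simp; omega, rfl, ?_, ?_⟩, rfl⟩
          · rw [← List.getLast?_append_of_ne_nil u (l₂ := (0:Fin (n+2)) :: T') (by simp),
              ← husplit,
              ← List.getLast?_append_of_ne_nil W₁ (l₂ := (0:Fin (n+2)) :: Wr) (by simp),
              ← hWsplit]
            exact hlW
          · exact fun vv hvv hveq => h0T' (hveq ▸ (by simpa using hvv))
        calc tw A 0 (W₁ ++ [(0:Fin (n+2))])
              + (tw A W₁.length (u ++ [(0:Fin (n+2))])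
                + tw A (W₁.length + u.length) ((0:Fin (n+2)) :: T'))
            ≤ (w:EReal) + (0 + (v:EReal)) := add_le_add ht1 (add_le_add ht2 ht3)
          _ = (w:EReal) + (v:EReal) := by rw [zero_add]
      · -- the walk avoids node 0 entirely
        have hWav : ∀ x ∈ W, x ≠ (0:Fin (n+2)) := fun x hx hxeq => h0mem (hxeq ▸ hx)
        have hWrange : 0 + W.length ≤ k + 1 := by omega
        have hWAsup : isWalk Asup W := trellis_walk_isWalk hsup hA 0 W hWrange hwW
        have hWcount : W.count 0 ≤ 1 := by
          rw [List.count_eq_zero_of_not_mem h0mem]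
          omega
        have hWint : (0:Fin (n+2)) ∉ W.dropLast.tail := by
          intro h0
          exact h0mem ((List.dropLast_sublist W).mem (List.mem_of_mem_tail h0))
        obtain ⟨P, hP, hPh, hPl, hPmem, hPlen, hPwt⟩ :=
          cycle_removal hstop _ hlam W.length W le_rfl hWAsup hWcount hWint
        obtain ⟨rW, hrW⟩ := wWeight_real hstop hWAsup
        obtain ⟨rP, hrP⟩ := wWeight_real hstop hP.1
        have hPav : ∀ x ∈ P, x ≠ (0:Fin (n+2)) := fun x hx => hWav x (hPmem x hx)
        have hmemg : wWeight Asup P ∈ {x : EReal | ∃ W', isPath Asup W' ∧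
            W'.head? = some i ∧ W'.getLast? = some j ∧
            (∀ vv ∈ W', vv ≠ (0:Fin (n+2))) ∧ x = wWeight Asup W'} :=
          ⟨P, hP, hPh.trans hhW, hPl.trans hlW, hPav, rfl⟩
        have hfing : {x : EReal | ∃ W', isPath Asup W' ∧
            W'.head? = some i ∧ W'.getLast? = some j ∧
            (∀ vv ∈ W', vv ≠ (0:Fin (n+2))) ∧ x = wWeight Asup W'}.Finite := by
          apply (((List.finite_length_le (Fin (n+2)) (n+2))).image (wWeight Asup)).subset
          rintro x ⟨W', hW'path, _, _, _, rfl⟩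
          refine ⟨W', ?_, rfl⟩
          have := List.Nodup.length_le_card hW'path.2
          simpa using this
        obtain ⟨P', hP', hh', hl', hav', hval'⟩ := (Set.nonempty_of_mem hmemg).csSup_mem hfing
        obtain ⟨g, hg⟩ := wWeight_real hstop hP'.1
        have hgam : gammaE Asup 0 i j = (g:EReal) := by
          unfold gammaE
          rw [hval', hg]
        have hrPg : rP ≤ g := by
          have h1 : (rP:EReal) ≤ (g:EReal) := by
            rw [← hg, ← hval', ← hrP]
            exact le_sSup hmemg
          exact_mod_cast h1
        have hbnd := hk1 g hgam
        have hWlen' : (W.length : ℝ) = (k:ℝ) + 1 := by exact_mod_cast hlenW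
        have hPcard : P.length ≤ n + 2 := by
          have := List.Nodup.length_le_card hP.2
          simpa using this
        have hchain := hPwt rW rP hrW hrP
        have hmul : lamStar Asup 0 * ((W.length:ℝ) - (P.length:ℝ))
            ≤ lamStar Asup 0 * ((k:ℝ) - ((n:ℝ)+1)) := by
          apply mul_le_mul_of_nonpos_left _ (le_of_lt hlamneg)
          have h1 : (P.length : ℝ) ≤ (n:ℝ) + 2 := by exact_mod_cast hPcard
          linarith
        have h3 : (w + v - g) / lamStar Asup 0 < (k:ℝ) - ((n:ℝ)+1) := by
          push_cast at hbnd
          linarith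
        have h4 := mul_lt_mul_of_neg_left h3 hlamneg
        rw [mul_comm (lamStar Asup 0) ((w + v - g) / lamStar Asup 0),
          div_mul_cancel₀ _ hlamne0] at h4
        have hfinal : rW < w + v := by linarith
        calc tw A 0 W ≤ (rW : EReal) := by
              rw [← hrW]; exact trellis_tw_le hsup hA 0 W hWrange
          _ ≤ ((w + v : ℝ) : EReal) := by exact_mod_cast le_of_lt hfinal
          _ = (w:EReal) + (v:EReal) := by rw [EReal.coe_add]
    · apply le_sSup
      have htdef : Y.length + (k - Y.length - T.length) = s₂ := by omega
      have hz' : ∀ l, Y.length < l → l ≤ Y.length + (k - Y.length - T.length) → A l 0 0 = 0 :=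
        fun l h1 h2 => hzA l (by omega) (by omega)
      refine ⟨Y ++ (0:Fin (n+2)) :: (List.replicate (k - Y.length - T.length) 0 ++ T),
        ⟨?_, ?_, ?_, ?_⟩, ?_⟩
      · rw [twalk_append, Nat.zero_add]
        refine ⟨by rw [← hYW₀]; exact hW₀walk, ?_⟩
        apply (twalk_idle 0 T (k - Y.length - T.length) Y.length hz').mpr
        rw [htdef, ← hTW₂]
        exact hW₂walk
      · simp; omega
      · rw [head?_append_cons Y 0 (List.replicate (k - Y.length - T.length) 0 ++ T) [],
          ← hYW₀]
        exact hW₀head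
      · rw [List.getLast?_append_of_ne_nil Y (by simp), getLast?_idle, ← hTW₂]
        exact hW₂last
      · rw [tw_append, Nat.zero_add,
          tw_idle 0 T (k - Y.length - T.length) Y.length hz', htdef, ← hTW₂, ← hYW₀,
          ← hwval, ← hvval]
  rw [hEQ3, hEQ1, hEQ2]

end MaxPlusTransient
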